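/- arXiv:2309.00517 — 4 statements merged into one kernel-verified Lean document; each statement's English description precedes it below -/
import Mathlib

section
/- Let x_0, x_1, ..., x_n be affinely independent points in ℝ^n, let σ = co({x_j}_{j=0}^n) be their convex hull, and let g : ℝ^n → ℝ^n be twice continuously differentiable on a neighborhood of σ with |∂²g^{(p)}(ξ)/∂x^{(q)}∂x^{(r)}| ≤ β for all ξ ∈ σ and all indices p, q, r ∈ {1,...,n}. For j = 0,...,n set c_j = (n/2)·‖x_j − x_0‖₂·(max_{k∈{1,...,n}} ‖x_k − x_0‖₂ + ‖x_j − x_0‖₂). Then for every x ∈ σ, writing x = Σ_{j=0}^n λ_j x_j with λ_j ≥ 0 and Σ_j λ_j = 1, one has ‖g(x) − Σ_{j=0}^n λ_j g(x_j)‖_∞ ≤ β · Σ_{j=0}^n λ_j c_j, where ‖·‖_∞ denotes the maximum absolute value of the components. -/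
/-!
Linear interpolation reproduces affine functions, so the interpolation error of `g⁽ᵖ⁾` equals the
interpolation error of its first-order Taylor remainder `r` at `x₀`. The bound `β` on the Hessian
entries gives `‖D²g⁽ᵖ⁾‖ ≤ nβ`, hence `|r y| ≤ (nβ/2)‖y - x₀‖²` on `σ`. At the interpolation point
`x = Σ λⱼ xⱼ` one has `‖x - x₀‖² ≤ (maxₖ ‖xₖ - x₀‖) · Σ λⱼ ‖xⱼ - x₀‖`, and adding the weighted
remainders at the vertices gives exactly `β Σ λⱼ cⱼ`.
-/

open scoped BigOperators

/-- The second partial derivative `∂²φ/∂x^(q)∂x^(r)` of a scalar function on `ℝ^n`. -/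
noncomputable def secondPartial {n : ℕ} (φ : EuclideanSpace ℝ (Fin n) → ℝ)
    (ξ : EuclideanSpace ℝ (Fin n)) (q r : Fin n) : ℝ :=
  fderiv ℝ (fun z => fderiv ℝ φ z (EuclideanSpace.single q (1 : ℝ))) ξ
    (EuclideanSpace.single r (1 : ℝ))

/-- The constant `c_j = (n/2)·‖x_j − x_0‖₂·(max_{k∈{1,…,n}} ‖x_k − x_0‖₂ + ‖x_j − x_0‖₂)`. -/
noncomputable def simplexConst {n : ℕ} (x : Fin (n + 1) → EuclideanSpace ℝ (Fin n))
    (j : Fin (n + 1)) : ℝ :=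
  ((n : ℝ) / 2) * ‖x j - x 0‖ * ((⨆ k : Fin n, ‖x k.succ - x 0‖) + ‖x j - x 0‖)

open Set

section Taylor

variable {E F : Type*} [NormedAddCommGroup E] [NormedSpace ℝ E] [NormedAddCommGroup F]
  [NormedSpace ℝ F] {f : E → F} {f' : E → E →L[ℝ] F} {s : Set E} {x y : E} {L : ℝ}

theorem Convex.norm_image_sub_sub_le_of_lipschitz_deriv (hs : Convex ℝ s)
    (hf : ∀ z ∈ s, HasFDerivWithinAt f (f' z) s z)
    (hf' : ∀ z ∈ s, ‖f' z - f' x‖ ≤ L * ‖z - x‖) (xs : x ∈ s) (ys : y ∈ s) :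
    ‖f y - f x - f' x (y - x)‖ ≤ L / 2 * ‖y - x‖ ^ 2 := by
  set γ : ℝ → E := ⇑(AffineMap.lineMap x y : ℝ →ᵃ[ℝ] E)
  have segm : MapsTo γ (Icc 0 1) s := hs.mapsTo_lineMap xs ys
  set g : ℝ → F := fun t => f (γ t) - t • f' x (y - x)
  have hg : ∀ t ∈ Icc (0 : ℝ) 1,
      HasDerivWithinAt g (f' (γ t) (y - x) - f' x (y - x)) (Icc 0 1) t := fun t ht => by
    have hfγ : HasDerivWithinAt (f ∘ γ) (f' (γ t) (y - x)) (Icc 0 1) t := by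
      simpa using (hf (γ t) (segm ht)).comp_hasDerivWithinAt t
        AffineMap.hasDerivWithinAt_lineMap segm
    exact (hfγ.sub ((hasDerivWithinAt_id t _).smul_const (f' x (y - x)))).congr_deriv
      (by simp)
  have hγ : ∀ t ∈ Icc (0 : ℝ) 1, ‖γ t - x‖ = t * ‖y - x‖ := fun t ht => by
    simp [γ, AffineMap.lineMap_apply, norm_smul, abs_of_nonneg ht.1]
  have hg_bound : ∀ t ∈ Ico (0 : ℝ) 1,
      ‖f' (γ t) (y - x) - f' x (y - x)‖ ≤ L * ‖y - x‖ ^ 2 * t := fun t ht => by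
    have ht' := Ico_subset_Icc_self ht
    calc ‖f' (γ t) (y - x) - f' x (y - x)‖ = ‖(f' (γ t) - f' x) (y - x)‖ := rfl
      _ ≤ ‖f' (γ t) - f' x‖ * ‖y - x‖ := ContinuousLinearMap.le_opNorm _ _
      _ ≤ L * ‖γ t - x‖ * ‖y - x‖ := by gcongr; exact hf' _ (segm ht')
      _ = L * ‖y - x‖ ^ 2 * t := by rw [hγ t ht']; ring
  -- compare `t ↦ g t - g 0` with the solution `t ↦ L/2 ‖y - x‖² t²` of the bounding ODE
  have := image_norm_le_of_norm_deriv_right_le_deriv_boundary (f := fun t => g t - g 0)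
    (B := fun t => L / 2 * ‖y - x‖ ^ 2 * t ^ 2) (B' := fun t => L * ‖y - x‖ ^ 2 * t)
    (fun t ht => (hg t ht).continuousWithinAt.sub continuousWithinAt_const)
    (fun t ht => ((hg t (Ico_subset_Icc_self ht)).sub_const (g 0)).mono_of_mem_nhdsWithin
      (Icc_mem_nhdsGE_of_mem ht))
    (by simp) (fun t => ((hasDerivAt_pow 2 t).const_mul _).congr_deriv (by norm_num; ring))
    hg_bound (right_mem_Icc.2 zero_le_one)
  simpa [g, γ, sub_right_comm] using this

theorem Convex.norm_image_sub_sub_le_of_norm_second_deriv_le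
    {f'' : E → E →L[ℝ] E →L[ℝ] F} {M : ℝ} (hs : Convex ℝ s)
    (hf : ∀ z ∈ s, HasFDerivWithinAt f (f' z) s z)
    (hf' : ∀ z ∈ s, HasFDerivWithinAt f' (f'' z) s z) (bound : ∀ z ∈ s, ‖f'' z‖ ≤ M)
    (xs : x ∈ s) (ys : y ∈ s) :
    ‖f y - f x - f' x (y - x)‖ ≤ M / 2 * ‖y - x‖ ^ 2 :=
  hs.norm_image_sub_sub_le_of_lipschitz_deriv hf
    (fun _ zs => hs.norm_image_sub_le_of_norm_hasFDerivWithin_le hf' bound xs zs) xs ys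

end Taylor

namespace EuclideanSpace

variable {ι : Type*} [Fintype ι]

theorem sum_abs_le_sqrt_card_mul_norm (v : EuclideanSpace ℝ ι) :
    ∑ i, |v i| ≤ √(Fintype.card ι) * ‖v‖ := by
  have h := sq_sum_le_card_mul_sum_sq (s := Finset.univ) (f := fun i => |v i|)
  rw [← Real.sqrt_sq (norm_nonneg v), ← Real.sqrt_mul (Nat.cast_nonneg _), norm_sq_eq]
  refine Real.le_sqrt_of_sq_le ?_
  simpa [Real.norm_eq_abs] using h

theorem opNorm_le_card_mul_of_norm_apply_single_le [DecidableEq ι] {F : Type*}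
    [NormedAddCommGroup F] [NormedSpace ℝ F]
    (B : EuclideanSpace ℝ ι →L[ℝ] EuclideanSpace ℝ ι →L[ℝ] F) {β : ℝ}
    (hB : ∀ i j, ‖B (single i 1) (single j 1)‖ ≤ β) : ‖B‖ ≤ Fintype.card ι * β := by
  rcases isEmpty_or_nonempty ι with hι | ⟨⟨i⟩⟩
  · simp [Subsingleton.elim B 0]
  have hβ : 0 ≤ β := (norm_nonneg _).trans (hB i i)
  have hexp : ∀ v : EuclideanSpace ℝ ι, v = ∑ i, v i • single i (1 : ℝ) := fun v => by
    simpa using ((basisFun ι ℝ).sum_repr v).symm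
  refine B.opNorm_le_bound₂ (by positivity) fun v w => ?_
  calc ‖B v w‖ = ‖∑ i, ∑ j, (v i * w j) • B (single i 1) (single j 1)‖ := by
        conv_lhs => rw [hexp v, hexp w]
        simp only [map_sum, map_smul, FunLike.coe_sum, Finset.sum_apply, FunLike.coe_smul,
          Pi.smul_apply, mul_smul, Finset.smul_sum]
        rw [Finset.sum_comm]
        simp_rw [smul_comm (w _)]
    _ ≤ ∑ i, ∑ j, |v i| * |w j| * β := by
        refine (norm_sum_le _ _).trans (Finset.sum_le_sum fun i _ => ?_)
        refine (norm_sum_le _ _).trans (Finset.sum_le_sum fun j _ => ?_)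
        rw [norm_smul, Real.norm_eq_abs, abs_mul]
        exact mul_le_mul_of_nonneg_left (hB i j) (by positivity)
    _ = (∑ i, |v i|) * (∑ j, |w j|) * β := by
        rw [Finset.sum_mul_sum, Finset.sum_mul]
        simp_rw [Finset.sum_mul]
    _ ≤ (√(Fintype.card ι) * ‖v‖) * (√(Fintype.card ι) * ‖w‖) * β := by
        gcongr
        · exact sum_abs_le_sqrt_card_mul_norm v
        · exact sum_abs_le_sqrt_card_mul_norm w
    _ = Fintype.card ι * β * ‖v‖ * ‖w‖ := by
        rw [show √(Fintype.card ι) * ‖v‖ * (√(Fintype.card ι) * ‖w‖) =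
          √(Fintype.card ι) * √(Fintype.card ι) * ‖v‖ * ‖w‖ by ring,
          Real.mul_self_sqrt (Nat.cast_nonneg _)]
        ring

end EuclideanSpace

theorem secondPartial_eq_fderiv_fderiv {n : ℕ} {φ : EuclideanSpace ℝ (Fin n) → ℝ}
    {ξ : EuclideanSpace ℝ (Fin n)} (h : DifferentiableAt ℝ (fderiv ℝ φ) ξ) (q r : Fin n) :
    secondPartial φ ξ q r =
      fderiv ℝ (fderiv ℝ φ) ξ (EuclideanSpace.single r 1) (EuclideanSpace.single q 1) := by
  rw [secondPartial, fderiv_clm_apply h (differentiableAt_const _)]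
  simp

theorem norm_fderiv_fderiv_le_of_abs_secondPartial_le {n : ℕ}
    {φ : EuclideanSpace ℝ (Fin n) → ℝ} {ξ : EuclideanSpace ℝ (Fin n)} {β : ℝ}
    (h : DifferentiableAt ℝ (fderiv ℝ φ) ξ) (hβ : ∀ q r, |secondPartial φ ξ q r| ≤ β) :
    ‖fderiv ℝ (fderiv ℝ φ) ξ‖ ≤ n * β := by
  refine (EuclideanSpace.opNorm_le_card_mul_of_norm_apply_single_le (β := β) _
    fun r q => ?_).trans_eq (by simp)
  rw [Real.norm_eq_abs, ← secondPartial_eq_fderiv_fderiv h]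
  exact hβ q r

section Interpolation

variable {E : Type*} [NormedAddCommGroup E] [NormedSpace ℝ E] {ι : Type*} [Fintype ι]
  {x : ι → E} {lam : ι → ℝ}

theorem sum_smul_sub_eq_sum_smul_sub (hlam1 : ∑ j, lam j = 1) (x₀ : E) :
    ∑ j, lam j • x j - x₀ = ∑ j, lam j • (x j - x₀) := by
  simp only [smul_sub, Finset.sum_sub_distrib, ← Finset.sum_smul, hlam1, one_smul]

theorem norm_sum_smul_sub_le (hlam0 : ∀ j, 0 ≤ lam j) (hlam1 : ∑ j, lam j = 1) (x₀ : E) :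
    ‖∑ j, lam j • x j - x₀‖ ≤ ∑ j, lam j * ‖x j - x₀‖ := by
  rw [sum_smul_sub_eq_sum_smul_sub hlam1]
  refine (norm_sum_le _ _).trans_eq (Finset.sum_congr rfl fun j _ => ?_)
  rw [norm_smul, Real.norm_of_nonneg (hlam0 j)]

theorem abs_sub_sum_mul_le_of_abs_taylor_remainder_le (φ : E → ℝ) (A : E →L[ℝ] ℝ) (x₀ : E)
    {K R : ℝ} (hK : 0 ≤ K) (hR : ∀ j, ‖x j - x₀‖ ≤ R)
    (hrem : ∀ y ∈ convexHull ℝ (range x), |φ y - φ x₀ - A (y - x₀)| ≤ K * ‖y - x₀‖ ^ 2)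
    (hlam0 : ∀ j, 0 ≤ lam j) (hlam1 : ∑ j, lam j = 1) :
    |φ (∑ j, lam j • x j) - ∑ j, lam j * φ (x j)| ≤
      K * ∑ j, lam j * (‖x j - x₀‖ * (R + ‖x j - x₀‖)) := by
  set X := ∑ j, lam j • x j
  set r : E → ℝ := fun y => φ y - φ x₀ - A (y - x₀)
  have hmem : ∀ j, x j ∈ convexHull ℝ (range x) := fun j => subset_convexHull ℝ _ ⟨j, rfl⟩
  have hX : X ∈ convexHull ℝ (range x) :=
    (convex_convexHull ℝ _).sum_mem (fun j _ => hlam0 j) hlam1 fun j _ => hmem j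
  have herror : φ X - ∑ j, lam j * φ (x j) = r X - ∑ j, lam j * r (x j) := by
    have hA : A (X - x₀) = ∑ j, lam j * A (x j - x₀) := by
      simp [X, sum_smul_sub_eq_sum_smul_sub hlam1]
    simp only [r, mul_sub, Finset.sum_sub_distrib, ← Finset.sum_mul, hlam1, hA]
    ring
  have hdist : ∑ j, lam j * ‖x j - x₀‖ ≤ R := by
    calc ∑ j, lam j * ‖x j - x₀‖ ≤ ∑ j, lam j * R :=
          Finset.sum_le_sum fun j _ => mul_le_mul_of_nonneg_left (hR j) (hlam0 j)
      _ = R := by rw [← Finset.sum_mul, hlam1, one_mul]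
  have hXsq : ‖X - x₀‖ ^ 2 ≤ R * ∑ j, lam j * ‖x j - x₀‖ := by
    have h := norm_sum_smul_sub_le (x := x) hlam0 hlam1 x₀
    rw [sq]
    exact mul_le_mul (h.trans hdist) h (norm_nonneg _) ((norm_nonneg _).trans (h.trans hdist))
  rw [herror]
  calc |r X - ∑ j, lam j * r (x j)| ≤ |r X| + ∑ j, lam j * |r (x j)| := by
        refine (abs_sub _ _).trans (add_le_add_right ((Finset.abs_sum_le_sum_abs _ _).trans_eq
          (Finset.sum_congr rfl fun j _ => ?_)) _)
        rw [abs_mul, abs_of_nonneg (hlam0 j)]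
    _ ≤ K * ‖X - x₀‖ ^ 2 + ∑ j, lam j * (K * ‖x j - x₀‖ ^ 2) := by
        gcongr with j
        · exact hrem X hX
        · exact hlam0 j
        · exact hrem (x j) (hmem j)
    _ ≤ K * (R * ∑ j, lam j * ‖x j - x₀‖) + ∑ j, lam j * (K * ‖x j - x₀‖ ^ 2) := by
        gcongr
    _ = K * ∑ j, lam j * (‖x j - x₀‖ * (R + ‖x j - x₀‖)) := by
        simp only [Finset.mul_sum]
        rw [← Finset.sum_add_distrib]
        exact Finset.sum_congr rfl fun j _ => by ring

end Interpolation

theorem norm_sub_zero_le_iSup_norm_succ_sub {E : Type*} [SeminormedAddCommGroup E] {n : ℕ}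
    (x : Fin (n + 1) → E) (j : Fin (n + 1)) : ‖x j - x 0‖ ≤ ⨆ k : Fin n, ‖x k.succ - x 0‖ := by
  cases j using Fin.cases with
  | zero => simpa using Real.iSup_nonneg fun k : Fin n => norm_nonneg (x k.succ - x 0)
  | succ k =>
    exact le_ciSup (f := fun k : Fin n => ‖x k.succ - x 0‖) (Set.finite_range _).bddAbove k

theorem cpa_interpolation_error_general (n : ℕ) (x : Fin (n + 1) → EuclideanSpace ℝ (Fin n))
    (g : EuclideanSpace ℝ (Fin n) → (Fin n → ℝ)) (β : ℝ)
    (U : Set (EuclideanSpace ℝ (Fin n))) (hU : IsOpen U)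
    (hσU : convexHull ℝ (Set.range x) ⊆ U)
    (hg : ContDiffOn ℝ 2 g U)
    (hβ : ∀ ξ ∈ convexHull ℝ (Set.range x), ∀ p q r : Fin n,
      |secondPartial (fun z => g z p) ξ q r| ≤ β)
    (lam : Fin (n + 1) → ℝ) (hlam0 : ∀ j, 0 ≤ lam j) (hlam1 : ∑ j, lam j = 1) :
    ∀ p : Fin n,
      |g (∑ j, lam j • x j) p - ∑ j, lam j * g (x j) p| ≤
        β * ∑ j, lam j * simplexConst x j := by
  intro p
  set φ := fun z => g z p
  have hφ : ContDiffOn ℝ 2 φ U := (contDiff_apply ℝ ℝ p).comp_contDiffOn hg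
  have hx₀ : x 0 ∈ convexHull ℝ (range x) := subset_convexHull ℝ _ ⟨0, rfl⟩
  have hβ0 : 0 ≤ β := (abs_nonneg _).trans (hβ (x 0) hx₀ p p p)
  have hD : ∀ z ∈ U, DifferentiableAt ℝ φ z := fun z hz =>
    (hφ.contDiffAt (hU.mem_nhds hz)).differentiableAt two_ne_zero
  have hD2 : ∀ z ∈ U, DifferentiableAt ℝ (fderiv ℝ φ) z := fun z hz =>
    ((hφ.contDiffAt (hU.mem_nhds hz)).fderiv_right (m := 1) le_rfl).differentiableAt one_ne_zero
  have htaylor : ∀ y ∈ convexHull ℝ (range x),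
      |φ y - φ (x 0) - fderiv ℝ φ (x 0) (y - x 0)| ≤ n * β / 2 * ‖y - x 0‖ ^ 2 := fun y hy =>
    (convex_convexHull ℝ _).norm_image_sub_sub_le_of_norm_second_deriv_le
      (fun z hz => (hD z (hσU hz)).hasFDerivAt.hasFDerivWithinAt)
      (fun z hz => (hD2 z (hσU hz)).hasFDerivAt.hasFDerivWithinAt)
      (fun z hz => norm_fderiv_fderiv_le_of_abs_secondPartial_le (hD2 z (hσU hz)) (hβ z hz p))
      hx₀ hy
  refine (abs_sub_sum_mul_le_of_abs_taylor_remainder_le φ _ (x 0) (by positivity)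
    (norm_sub_zero_le_iSup_norm_succ_sub x) htaylor hlam0 hlam1).trans_eq ?_
  simp only [simplexConst, Finset.mul_sum]
  exact Finset.sum_congr rfl fun j _ => by ring

/-- CPA interpolation error bound on a simplex (componentwise, i.e. in the
`∞`-norm on the codomain). -/
theorem cpa_interpolation_error (n : ℕ) (x : Fin (n + 1) → EuclideanSpace ℝ (Fin n))
    (hx : LinearIndependent ℝ (fun k : Fin n => x k.succ - x 0))
    (g : EuclideanSpace ℝ (Fin n) → (Fin n → ℝ)) (β : ℝ)
    (U : Set (EuclideanSpace ℝ (Fin n))) (hU : IsOpen U)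
    (hσU : convexHull ℝ (Set.range x) ⊆ U)
    (hg : ContDiffOn ℝ 2 g U)
    (hβ : ∀ ξ ∈ convexHull ℝ (Set.range x), ∀ p q r : Fin n,
      |secondPartial (fun z => g z p) ξ q r| ≤ β)
    (lam : Fin (n + 1) → ℝ) (hlam0 : ∀ j, 0 ≤ lam j) (hlam1 : ∑ j, lam j = 1) :
    ∀ p : Fin n,
      |g (∑ j, lam j • x j) p - ∑ j, lam j * g (x j) p| ≤
        β * ∑ j, lam j * simplexConst x j :=
  cpa_interpolation_error_general n x g β U hU hσU hg hβ lam hlam0 hlam1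
end

section
/- Let x_0, ..., x_n be affinely independent points in ℝ^n with convex hull σ, and let c_j = (n/2)·‖x_j − x_0‖₂·(max_k ‖x_k − x_0‖₂ + ‖x_j − x_0‖₂). Let f : ℝ^n → ℝ^n, h : ℝ^n → ℝ^q, and G : ℝ^n → ℝ^{n×m} be given, and define ḡ(x) = ‖G(x)G(x)ᵀ‖_∞ (induced ∞-norm) and h̄(x) = ‖h(x)‖₂². Assume f, h̄, and ḡ are twice continuously differentiable on a neighborhood of σ, with: all second partial derivatives of all components of f bounded in absolute value by β on σ; all second partial derivatives of h̄ bounded in absolute value by β̃ on σ; and all second partial derivatives of ḡ bounded in absolute value by β̄ on σ. Let w ∈ ℝ^n, let l ∈ ℝ^n satisfy |w^{(k)}| ≤ l^{(k)} for each k, let γ > 0 and b₁ ∈ ℝ. Define H_j = f(x_j) · w + (1/2)‖h(x_j)‖₂² + (1_n·l·β + (1/2)β̃)·c_j + (1/(2γ))·(ḡ(x_j) + β̄ c_j)·(1_n·l)². If H_j ≤ −b₁ for every j = 0, ..., n, then for every x ∈ σ: w · f(x) + (1/(2γ))·‖G(x)ᵀ w‖₂² + (1/2)·‖h(x)‖₂²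 ≤ −b₁. -/
open scoped BigOperators

/-- The operator norm induced by the vector `∞`-norm: the maximum absolute row sum. -/
noncomputable def matInfNorm {n m : ℕ} (A : Matrix (Fin n) (Fin m) ℝ) : ℝ :=
  ⨆ i, ∑ j, |A i j|

/-!
Each component `f_k`, `h̄ = ‖h‖²` and `ḡ = ‖GGᵀ‖_∞` is compared with its linear interpolation
on the simplex. Taylor's formula at the barycentre `x̄ = Σ λ_j x_j`, where the first-order terms
cancel, bounds the interpolation error of a `C²` function whose second partials are at most `B`
by `(n B / 2) Σ λ_j ‖x_j − x̄‖²`. This weighted variance only grows when `x̄` is replaced by `x_0`,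
and `(n / 2) ‖x_j − x_0‖² ≤ c_j`. Together with `‖Gᵀw‖² = wᵀ(GGᵀ)w ≤ ‖GGᵀ‖_∞ (1_n·l)²`, this
bounds the Hamilton–Jacobi expression at `x̄` by `Σ λ_j H_j ≤ −b₁`.
-/

open Set Matrix

theorem sum_smul_sub_sum_smul_eq_zero {R M ι : Type*} [Ring R] [AddCommGroup M] [Module R M]
    [Fintype ι] (x : ι → M) {lam : ι → R} (hlam1 : ∑ j, lam j = 1) :
    ∑ j, lam j • (x j - ∑ k, lam k • x k) = 0 := by
  simp [smul_sub, Finset.sum_sub_distrib, ← Finset.sum_smul, hlam1]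

theorem abs_sub_sub_deriv_le_of_abs_second_deriv_le {g g' g'' : ℝ → ℝ} {C : ℝ}
    (hg : ∀ t ∈ Icc (0 : ℝ) 1, HasDerivAt g (g' t) t)
    (hg' : ∀ t ∈ Icc (0 : ℝ) 1, HasDerivAt g' (g'' t) t)
    (hC : ∀ t ∈ Icc (0 : ℝ) 1, |g'' t| ≤ C) :
    |g 1 - g 0 - g' 0| ≤ C / 2 := by
  have hr : ∀ t ∈ Icc (0 : ℝ) 1, HasDerivAt (fun t => g t - t * g' 0) (g' t - g' 0) t :=
    fun t ht => by simpa using (hg t ht).fun_sub ((hasDerivAt_id' t).mul_const (g' 0))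
  -- Cauchy's mean value theorem against `t ↦ t ^ 2`, then the mean value bound for `g'`.
  obtain ⟨c, hc, hcauchy⟩ := exists_ratio_hasDerivAt_eq_ratio_slope _ _ zero_lt_one
    (HasDerivAt.continuousOn hr) (fun t ht => hr t (Ioo_subset_Icc_self ht))
    (fun t => t ^ 2) (fun t => 2 * t) (by fun_prop) (fun t _ => by simpa using hasDerivAt_pow 2 t)
  have hmean : |g' c - g' 0| ≤ C * c := by
    simpa using norm_image_sub_le_of_norm_deriv_le_segment' (f := g') (a := 0) (b := 1)
      (fun t ht => (hg' t ht).hasDerivWithinAt) (fun t ht => hC t (Ico_subset_Icc_self ht))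
      c (Ioo_subset_Icc_self hc)
  have hc0 : 0 < c := hc.1
  norm_num at hcauchy
  rw [hcauchy, abs_mul, abs_of_pos (by positivity : (0:ℝ) < 2 * c)] at hmean
  rw [le_div_iff₀ two_pos, show g 1 - g 0 - g' 0 = g 1 - g' 0 - g 0 by ring]
  nlinarith

section
variable {E : Type*} [NormedAddCommGroup E] [NormedSpace ℝ E]

theorem ContDiffAt.hasFDerivAt_fderiv_apply {φ : E → ℝ} {ξ : E} (hφ : ContDiffAt ℝ 2 φ ξ)
    (u : E) : HasFDerivAt (fun z => fderiv ℝ φ z u) ((fderiv ℝ (fderiv ℝ φ) ξ).flip u) ξ := by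
  have hD : DifferentiableAt ℝ (fderiv ℝ φ) ξ :=
    (hφ.fderiv_right (m := 1) (by norm_num)).differentiableAt one_ne_zero
  simpa using hD.hasFDerivAt.clm_apply (hasFDerivAt_const u ξ)

theorem abs_sub_sub_fderiv_le_of_abs_second_fderiv_le {φ : E → ℝ} {a v : E} {C : ℝ}
    (hφ : ∀ t ∈ Icc (0 : ℝ) 1, ContDiffAt ℝ 2 φ (a + t • v))
    (hC : ∀ t ∈ Icc (0 : ℝ) 1, |fderiv ℝ (fderiv ℝ φ) (a + t • v) v v| ≤ C) :
    |φ (a + v) - φ a - fderiv ℝ φ a v| ≤ C / 2 := by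
  have hpath : ∀ t : ℝ, HasDerivAt (fun t : ℝ => a + t • v) v t := fun t => by
    simpa using ((hasDerivAt_id t).smul_const v).const_add a
  simpa using abs_sub_sub_deriv_le_of_abs_second_deriv_le (g := fun t => φ (a + t • v))
    (fun t ht => ((hφ t ht).differentiableAt (by norm_num)).hasFDerivAt.comp_hasDerivAt t (hpath t))
    (fun t ht => ((hφ t ht).hasFDerivAt_fderiv_apply v).comp_hasDerivAt t (hpath t)) hC

theorem abs_sum_mul_sub_le_of_abs_second_fderiv_le {ι : Type*} [Fintype ι] {x : ι → E}
    {φ : E → ℝ} {K : ℝ}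
    (hφ : ∀ ξ ∈ convexHull ℝ (range x), ContDiffAt ℝ 2 φ ξ)
    (hK : ∀ ξ ∈ convexHull ℝ (range x), ∀ v, |fderiv ℝ (fderiv ℝ φ) ξ v v| ≤ K * ‖v‖ ^ 2)
    {lam : ι → ℝ} (hlam0 : ∀ j, 0 ≤ lam j) (hlam1 : ∑ j, lam j = 1) :
    |∑ j, lam j * φ (x j) - φ (∑ j, lam j • x j)|
      ≤ K / 2 * ∑ j, lam j * ‖x j - ∑ k, lam k • x k‖ ^ 2 := by
  set xb := ∑ j, lam j • x j
  have hconv := convex_convexHull ℝ (range x)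
  have hxb : xb ∈ convexHull ℝ (range x) := hconv.sum_mem (fun j _ => hlam0 j) hlam1
    fun j _ => subset_convexHull ℝ _ (mem_range_self j)
  set r : ι → ℝ := fun j => φ (x j) - φ xb - fderiv ℝ φ xb (x j - xb)
  have hr : ∀ j, |r j| ≤ K / 2 * ‖x j - xb‖ ^ 2 := fun j => by
    have hseg : ∀ t ∈ Icc (0 : ℝ) 1, xb + t • (x j - xb) ∈ convexHull ℝ (range x) :=
      fun t ht => hconv.add_smul_sub_mem hxb (subset_convexHull ℝ _ (mem_range_self j)) ht
    have := abs_sub_sub_fderiv_le_of_abs_second_fderiv_le (fun t ht => hφ _ (hseg t ht))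
      (fun t ht => hK _ (hseg t ht) (x j - xb))
    rw [add_sub_cancel] at this
    linarith
  have hlin : ∑ j, lam j * fderiv ℝ φ xb (x j - xb) = 0 := by
    have hzero : ∑ j, lam j • (x j - xb) = 0 := sum_smul_sub_sum_smul_eq_zero x hlam1
    simp only [← smul_eq_mul, ← map_smul, ← map_sum, hzero, map_zero]
  have hsplit : ∑ j, lam j * φ (x j) - φ xb = ∑ j, lam j * r j := by
    simp only [r, mul_sub, Finset.sum_sub_distrib, hlin, ← Finset.sum_mul, hlam1]
    ring
  rw [hsplit, Finset.mul_sum]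
  refine (Finset.abs_sum_le_sum_abs _ _).trans (Finset.sum_le_sum fun j _ => ?_)
  rw [abs_mul, abs_of_nonneg (hlam0 j), mul_left_comm]
  exact mul_le_mul_of_nonneg_left (hr j) (hlam0 j)

end

theorem sum_mul_norm_sub_sum_smul_sq_le {F ι : Type*} [NormedAddCommGroup F]
    [InnerProductSpace ℝ F] [Fintype ι] (x : ι → F) {lam : ι → ℝ} (hlam1 : ∑ j, lam j = 1)
    (y : F) : ∑ j, lam j * ‖x j - ∑ k, lam k • x k‖ ^ 2 ≤ ∑ j, lam j * ‖x j - y‖ ^ 2 := by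
  set xb := ∑ k, lam k • x k
  have hexp : ∀ j, ‖x j - y‖ ^ 2
      = ‖x j - xb‖ ^ 2 + 2 * inner ℝ (x j - xb) (xb - y) + ‖xb - y‖ ^ 2 := fun j => by
    rw [← norm_add_sq_real, sub_add_sub_cancel]
  have hcross : ∑ j, lam j * inner ℝ (x j - xb) (xb - y) = 0 := by
    have hzero : ∑ j, lam j • (x j - xb) = 0 := sum_smul_sub_sum_smul_eq_zero x hlam1
    simp only [← real_inner_smul_left, ← sum_inner, hzero, inner_zero_left]
  have hsum : ∑ j, lam j * ‖x j - y‖ ^ 2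
      = ∑ j, lam j * ‖x j - xb‖ ^ 2 + 2 * ∑ j, lam j * inner ℝ (x j - xb) (xb - y)
        + (∑ j, lam j) * ‖xb - y‖ ^ 2 := by
    simp only [hexp, mul_add, Finset.sum_add_distrib, Finset.mul_sum, Finset.sum_mul]
    congr 1; congr 1; exact Finset.sum_congr rfl fun j _ => by ring
  rw [hsum, hcross, hlam1]
  nlinarith [sq_nonneg ‖xb - y‖]

theorem sum_mul_le_sum_mul_add_mul {ι : Type*} [Fintype ι] {w l a b : ι → ℝ} {D : ℝ}
    (hwl : ∀ k, |w k| ≤ l k) (hab : ∀ k, |a k - b k| ≤ D) :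
    ∑ k, w k * b k ≤ ∑ k, w k * a k + (∑ k, l k) * D := by
  have hl0 : ∀ k, 0 ≤ l k := fun k => (abs_nonneg _).trans (hwl k)
  have : ∑ k, w k * (b k - a k) ≤ ∑ k, l k * D := Finset.sum_le_sum fun k _ =>
    calc w k * (b k - a k) ≤ |w k| * |a k - b k| := by
          rw [abs_sub_comm, ← abs_mul]; exact le_abs_self _
      _ ≤ l k * D := mul_le_mul (hwl k) (hab k) (abs_nonneg _) (hl0 k)
  simp only [mul_sub, Finset.sum_sub_distrib, ← Finset.sum_mul] at this
  linarith

theorem abs_le_matInfNorm {n m : ℕ} (A : Matrix (Fin n) (Fin m) ℝ) (i : Fin n) (j : Fin m) :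
    |A i j| ≤ matInfNorm A :=
  (Finset.single_le_sum (f := fun j => |A i j|) (fun _ _ => abs_nonneg _)
    (Finset.mem_univ j)).trans (le_ciSup (f := fun i => ∑ j, |A i j|) (finite_range _).bddAbove i)

theorem dotProduct_mulVec_le_matInfNorm_mul_sq {n : ℕ} (M : Matrix (Fin n) (Fin n) ℝ)
    {w l : Fin n → ℝ} (hwl : ∀ k, |w k| ≤ l k) :
    w ⬝ᵥ M *ᵥ w ≤ matInfNorm M * (∑ k, l k) ^ 2 := by
  have hl0 : ∀ k, 0 ≤ l k := fun k => (abs_nonneg _).trans (hwl k)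
  calc w ⬝ᵥ M *ᵥ w = ∑ k, ∑ p, w k * w p * M k p := by
        simp only [dotProduct, mulVec, Finset.mul_sum]
        exact Finset.sum_congr rfl fun k _ => Finset.sum_congr rfl fun p _ => by ring
    _ ≤ ∑ k, ∑ p, l k * l p * matInfNorm M := by
        refine Finset.sum_le_sum fun k _ => Finset.sum_le_sum fun p _ => ?_
        refine (le_abs_self _).trans ?_
        rw [abs_mul, abs_mul]
        exact mul_le_mul (mul_le_mul (hwl k) (hwl p) (abs_nonneg _) (hl0 k))
          (abs_le_matInfNorm M k p) (abs_nonneg _) (mul_nonneg (hl0 k) (hl0 p))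
    _ = matInfNorm M * (∑ k, l k) ^ 2 := by
        rw [sq, Finset.sum_mul_sum, Finset.mul_sum]
        exact Finset.sum_congr rfl fun k _ => by rw [Finset.mul_sum]; simp only [mul_comm]

theorem sum_transpose_mulVec_sq_le {n m : ℕ} (A : Matrix (Fin n) (Fin m) ℝ)
    {w l : Fin n → ℝ} (hwl : ∀ k, |w k| ≤ l k) :
    ∑ i, (A.transpose.mulVec w i) ^ 2 ≤ matInfNorm (A * A.transpose) * (∑ k, l k) ^ 2 := by
  have hquad : ∑ i, (A.transpose.mulVec w i) ^ 2 = w ⬝ᵥ (A * A.transpose) *ᵥ w := by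
    rw [← mulVec_mulVec, dotProduct_mulVec, ← mulVec_transpose]
    simp only [dotProduct, sq]
  exact hquad ▸ dotProduct_mulVec_le_matInfNorm_mul_sq _ hwl

section Euclidean
variable {n : ℕ}

theorem secondPartial_eq_fderiv_fderiv_apply {φ : EuclideanSpace ℝ (Fin n) → ℝ}
    {ξ : EuclideanSpace ℝ (Fin n)} (hφ : ContDiffAt ℝ 2 φ ξ) (q r : Fin n) :
    secondPartial φ ξ q r
      = fderiv ℝ (fderiv ℝ φ) ξ (EuclideanSpace.single r 1) (EuclideanSpace.single q 1) := by
  rw [secondPartial, (hφ.hasFDerivAt_fderiv_apply _).fderiv]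
  rfl

theorem abs_apply_apply_le_of_abs_apply_single_le
    (Ψ : EuclideanSpace ℝ (Fin n) →L[ℝ] EuclideanSpace ℝ (Fin n) →L[ℝ] ℝ) {B : ℝ}
    (hB : ∀ q r : Fin n, |Ψ (EuclideanSpace.single r 1) (EuclideanSpace.single q 1)| ≤ B)
    (v : EuclideanSpace ℝ (Fin n)) : |Ψ v v| ≤ n * B * ‖v‖ ^ 2 := by
  rcases isEmpty_or_nonempty (Fin n) with _ | ⟨⟨q₀⟩⟩
  · simp [Subsingleton.elim v 0]
  have hB0 : 0 ≤ B := (abs_nonneg _).trans (hB q₀ q₀)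
  have hexpand : Ψ v v = ∑ q, ∑ r, v q * v r
      * Ψ (EuclideanSpace.single r 1) (EuclideanSpace.single q 1) := by
    conv_lhs => rw [← (EuclideanSpace.basisFun (Fin n) ℝ).sum_repr v]
    simp [Finset.mul_sum, mul_assoc]
  calc |Ψ v v| ≤ ∑ q, ∑ r, |v q| * |v r| * B := by
        rw [hexpand]
        refine (Finset.abs_sum_le_sum_abs _ _).trans (Finset.sum_le_sum fun q _ => ?_)
        refine (Finset.abs_sum_le_sum_abs _ _).trans (Finset.sum_le_sum fun r _ => ?_)
        rw [abs_mul, abs_mul]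
        exact mul_le_mul_of_nonneg_left (hB q r) (by positivity)
    _ = B * (∑ q, |v q|) ^ 2 := by
        rw [sq, Finset.sum_mul_sum, Finset.mul_sum]
        exact Finset.sum_congr rfl fun q _ => by rw [Finset.mul_sum]; simp only [mul_comm]
    _ ≤ B * (n * ‖v‖ ^ 2) := by
        refine mul_le_mul_of_nonneg_left ?_ hB0
        simpa [EuclideanSpace.real_norm_sq_eq] using
          sq_sum_le_card_mul_sum_sq (s := Finset.univ) (f := fun q => |v q|)
    _ = n * B * ‖v‖ ^ 2 := by ring

theorem mul_norm_sub_sq_le_simplexConst (x : Fin (n + 1) → EuclideanSpace ℝ (Fin n))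
    {B : ℝ} (hnB : 0 ≤ n * B) (j : Fin (n + 1)) :
    n * B / 2 * ‖x j - x 0‖ ^ 2 ≤ B * simplexConst x j := by
  have hM : 0 ≤ ⨆ k : Fin n, ‖x k.succ - x 0‖ := Real.iSup_nonneg fun _ => norm_nonneg _
  have := mul_nonneg (mul_nonneg hnB (norm_nonneg (x j - x 0))) hM
  rw [simplexConst]
  nlinarith

theorem abs_sum_mul_sub_le_mul_sum_simplexConst {x : Fin (n + 1) → EuclideanSpace ℝ (Fin n)}
    {φ : EuclideanSpace ℝ (Fin n) → ℝ} {B : ℝ}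
    (hφ : ∀ ξ ∈ convexHull ℝ (range x), ContDiffAt ℝ 2 φ ξ)
    (hB : ∀ ξ ∈ convexHull ℝ (range x), ∀ q r : Fin n, |secondPartial φ ξ q r| ≤ B)
    {lam : Fin (n + 1) → ℝ} (hlam0 : ∀ j, 0 ≤ lam j) (hlam1 : ∑ j, lam j = 1) :
    |∑ j, lam j * φ (x j) - φ (∑ j, lam j • x j)| ≤ B * ∑ j, lam j * simplexConst x j := by
  have hx0 : x 0 ∈ convexHull ℝ (range x) := subset_convexHull ℝ _ (mem_range_self 0)
  have hnB : 0 ≤ n * B := by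
    rcases n.eq_zero_or_pos with rfl | hn
    · simp
    exact mul_nonneg n.cast_nonneg ((abs_nonneg _).trans (hB _ hx0 ⟨0, hn⟩ ⟨0, hn⟩))
  have hK : ∀ ξ ∈ convexHull ℝ (range x), ∀ v,
      |fderiv ℝ (fderiv ℝ φ) ξ v v| ≤ n * B * ‖v‖ ^ 2 := fun ξ hξ =>
    abs_apply_apply_le_of_abs_apply_single_le _ fun q r => by
      rw [← secondPartial_eq_fderiv_fderiv_apply (hφ ξ hξ)]
      exact hB ξ hξ q r
  calc |∑ j, lam j * φ (x j) - φ (∑ j, lam j • x j)|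
      ≤ n * B / 2 * ∑ j, lam j * ‖x j - ∑ k, lam k • x k‖ ^ 2 :=
        abs_sum_mul_sub_le_of_abs_second_fderiv_le hφ hK hlam0 hlam1
    _ ≤ n * B / 2 * ∑ j, lam j * ‖x j - x 0‖ ^ 2 :=
        mul_le_mul_of_nonneg_left (sum_mul_norm_sub_sum_smul_sq_le x hlam1 (x 0)) (by positivity)
    _ ≤ B * ∑ j, lam j * simplexConst x j := by
        rw [Finset.mul_sum, Finset.mul_sum]
        refine Finset.sum_le_sum fun j _ => ?_
        rw [mul_left_comm, mul_left_comm B]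
        exact mul_le_mul_of_nonneg_left (mul_norm_sub_sq_le_simplexConst x hnB j) (hlam0 j)

theorem le_sum_mul_add_mul_sum_simplexConst {x : Fin (n + 1) → EuclideanSpace ℝ (Fin n)}
    {φ : EuclideanSpace ℝ (Fin n) → ℝ} {B : ℝ}
    (hφ : ∀ ξ ∈ convexHull ℝ (range x), ContDiffAt ℝ 2 φ ξ)
    (hB : ∀ ξ ∈ convexHull ℝ (range x), ∀ q r : Fin n, |secondPartial φ ξ q r| ≤ B)
    {lam : Fin (n + 1) → ℝ} (hlam0 : ∀ j, 0 ≤ lam j) (hlam1 : ∑ j, lam j = 1) :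
    φ (∑ j, lam j • x j) ≤ ∑ j, lam j * φ (x j) + B * ∑ j, lam j * simplexConst x j := by
  linarith [(abs_le.mp (abs_sum_mul_sub_le_mul_sum_simplexConst hφ hB hlam0 hlam1)).1]

theorem sum_mul_apply_le_sum_mul_add_mul_sum_simplexConst {ι : Type*} [Fintype ι]
    {x : Fin (n + 1) → EuclideanSpace ℝ (Fin n)} {f : EuclideanSpace ℝ (Fin n) → ι → ℝ} {β : ℝ}
    (hf : ∀ k, ∀ ξ ∈ convexHull ℝ (range x), ContDiffAt ℝ 2 (fun z => f z k) ξ)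
    (hβ : ∀ ξ ∈ convexHull ℝ (range x), ∀ k, ∀ q r : Fin n,
      |secondPartial (fun z => f z k) ξ q r| ≤ β)
    {w l : ι → ℝ} (hwl : ∀ k, |w k| ≤ l k)
    {lam : Fin (n + 1) → ℝ} (hlam0 : ∀ j, 0 ≤ lam j) (hlam1 : ∑ j, lam j = 1) :
    ∑ k, w k * f (∑ j, lam j • x j) k
      ≤ ∑ j, lam j * ∑ k, f (x j) k * w k
        + (∑ k, l k) * (β * ∑ j, lam j * simplexConst x j) := by
  have hswap : ∑ k, w k * ∑ j, lam j * f (x j) k = ∑ j, lam j * ∑ k, f (x j) k * w k := by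
    simp only [Finset.mul_sum]
    rw [Finset.sum_comm]
    exact Finset.sum_congr rfl fun j _ => Finset.sum_congr rfl fun k _ => by ring
  exact hswap ▸ sum_mul_le_sum_mul_add_mul hwl fun k =>
    abs_sum_mul_sub_le_mul_sum_simplexConst (hf k) (fun ξ hξ => hβ ξ hξ k) hlam0 hlam1

end Euclidean

theorem hj_vertex_bound_general (n m q : ℕ) (x : Fin (n + 1) → EuclideanSpace ℝ (Fin n))
    (f : EuclideanSpace ℝ (Fin n) → (Fin n → ℝ))
    (h : EuclideanSpace ℝ (Fin n) → (Fin q → ℝ))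
    (G : EuclideanSpace ℝ (Fin n) → Matrix (Fin n) (Fin m) ℝ)
    (β βtilde βbar : ℝ)
    (U : Set (EuclideanSpace ℝ (Fin n))) (hU : IsOpen U)
    (hσU : convexHull ℝ (Set.range x) ⊆ U)
    (hf : ContDiffOn ℝ 2 f U)
    (hhbar : ContDiffOn ℝ 2 (fun z => ∑ i, (h z i) ^ 2) U)
    (hgbar : ContDiffOn ℝ 2 (fun z => matInfNorm (G z * (G z).transpose)) U)
    (hβ : ∀ ξ ∈ convexHull ℝ (Set.range x), ∀ p q' r : Fin n,
      |secondPartial (fun z => f z p) ξ q' r| ≤ β)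
    (hβtilde : ∀ ξ ∈ convexHull ℝ (Set.range x), ∀ q' r : Fin n,
      |secondPartial (fun z => ∑ i, (h z i) ^ 2) ξ q' r| ≤ βtilde)
    (hβbar : ∀ ξ ∈ convexHull ℝ (Set.range x), ∀ q' r : Fin n,
      |secondPartial (fun z => matInfNorm (G z * (G z).transpose)) ξ q' r| ≤ βbar)
    (w l : Fin n → ℝ) (hwl : ∀ k, |w k| ≤ l k)
    (γ b₁ : ℝ) (hγ : 0 < γ)
    (hH : ∀ j : Fin (n + 1),
      (∑ k, f (x j) k * w k) + (1 / 2) * (∑ i, (h (x j) i) ^ 2)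
        + ((∑ k, l k) * β + (1 / 2) * βtilde) * simplexConst x j
        + (1 / (2 * γ)) * (matInfNorm (G (x j) * (G (x j)).transpose)
            + βbar * simplexConst x j) * (∑ k, l k) ^ 2
        ≤ -b₁)
    (lam : Fin (n + 1) → ℝ) (hlam0 : ∀ j, 0 ≤ lam j) (hlam1 : ∑ j, lam j = 1) :
    (∑ k, w k * f (∑ j, lam j • x j) k)
      + (1 / (2 * γ)) *
          (∑ i, ((G (∑ j, lam j • x j)).transpose.mulVec w i) ^ 2)
      + (1 / 2) * (∑ i, (h (∑ j, lam j • x j) i) ^ 2) ≤ -b₁ := by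
  set xb := ∑ j, lam j • x j
  set L := ∑ k, l k
  set F : Fin (n + 1) → ℝ := fun j => ∑ k, f (x j) k * w k
  set hb : Fin (n + 1) → ℝ := fun j => ∑ i, (h (x j) i) ^ 2
  set gb : Fin (n + 1) → ℝ := fun j => matInfNorm (G (x j) * (G (x j)).transpose)
  set c : Fin (n + 1) → ℝ := simplexConst x
  have hcd : ∀ {φ : EuclideanSpace ℝ (Fin n) → ℝ}, ContDiffOn ℝ 2 φ U →
      ∀ ξ ∈ convexHull ℝ (Set.range x), ContDiffAt ℝ 2 φ ξ :=
    fun hφ ξ hξ => hφ.contDiffAt (hU.mem_nhds (hσU hξ))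
  have hfxb : ∑ k, w k * f xb k ≤ ∑ j, lam j * F j + L * (β * ∑ j, lam j * c j) :=
    sum_mul_apply_le_sum_mul_add_mul_sum_simplexConst (fun k => hcd (contDiffOn_pi.mp hf k)) hβ
      hwl hlam0 hlam1
  have hhxb : ∑ i, (h xb i) ^ 2 ≤ ∑ j, lam j * hb j + βtilde * ∑ j, lam j * c j :=
    le_sum_mul_add_mul_sum_simplexConst (hcd hhbar) hβtilde hlam0 hlam1
  have hgxb : matInfNorm (G xb * (G xb).transpose)
      ≤ ∑ j, lam j * gb j + βbar * ∑ j, lam j * c j :=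
    le_sum_mul_add_mul_sum_simplexConst (hcd hgbar) hβbar hlam0 hlam1
  have hGw : 1 / (2 * γ) * ∑ i, ((G xb).transpose.mulVec w i) ^ 2
      ≤ 1 / (2 * γ) * (∑ j, lam j * gb j + βbar * ∑ j, lam j * c j) * L ^ 2 := by
    rw [mul_assoc]
    exact mul_le_mul_of_nonneg_left ((sum_transpose_mulVec_sq_le (G xb) hwl).trans
      (mul_le_mul_of_nonneg_right hgxb (sq_nonneg L))) (by positivity)
  have hvert : ∑ j, lam j * F j + 1 / 2 * ∑ j, lam j * hb j
      + (L * β + 1 / 2 * βtilde) * ∑ j, lam j * c j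
      + 1 / (2 * γ) * (∑ j, lam j * gb j + βbar * ∑ j, lam j * c j) * L ^ 2 ≤ -b₁ :=
    calc _ = ∑ j, lam j * (F j + 1 / 2 * hb j + (L * β + 1 / 2 * βtilde) * c j
            + 1 / (2 * γ) * (gb j + βbar * c j) * L ^ 2) := by
          simp only [mul_add, add_mul, Finset.mul_sum, Finset.sum_mul, ← Finset.sum_add_distrib]
          exact Finset.sum_congr rfl fun j _ => by ring
      _ ≤ ∑ j, lam j * -b₁ := Finset.sum_le_sum fun j _ =>
          mul_le_mul_of_nonneg_left (hH j) (hlam0 j)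
      _ = -b₁ := by rw [← Finset.sum_mul, hlam1, one_mul]
  linarith

/-- if the vertex quantities `H_j` are all `≤ −b₁`, then the Hamilton–Jacobi
expression `w·f(x) + (1/(2γ))‖G(x)ᵀw‖₂² + (1/2)‖h(x)‖₂²` is `≤ −b₁` on the whole simplex. -/
theorem hj_vertex_bound (n m q : ℕ) (x : Fin (n + 1) → EuclideanSpace ℝ (Fin n))
    (hx : LinearIndependent ℝ (fun k : Fin n => x k.succ - x 0))
    (f : EuclideanSpace ℝ (Fin n) → (Fin n → ℝ))
    (h : EuclideanSpace ℝ (Fin n) → (Fin q → ℝ))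
    (G : EuclideanSpace ℝ (Fin n) → Matrix (Fin n) (Fin m) ℝ)
    (β βtilde βbar : ℝ)
    (U : Set (EuclideanSpace ℝ (Fin n))) (hU : IsOpen U)
    (hσU : convexHull ℝ (Set.range x) ⊆ U)
    (hf : ContDiffOn ℝ 2 f U)
    (hhbar : ContDiffOn ℝ 2 (fun z => ∑ i, (h z i) ^ 2) U)
    (hgbar : ContDiffOn ℝ 2 (fun z => matInfNorm (G z * (G z).transpose)) U)
    (hβ : ∀ ξ ∈ convexHull ℝ (Set.range x), ∀ p q' r : Fin n,
      |secondPartial (fun z => f z p) ξ q' r| ≤ β)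
    (hβtilde : ∀ ξ ∈ convexHull ℝ (Set.range x), ∀ q' r : Fin n,
      |secondPartial (fun z => ∑ i, (h z i) ^ 2) ξ q' r| ≤ βtilde)
    (hβbar : ∀ ξ ∈ convexHull ℝ (Set.range x), ∀ q' r : Fin n,
      |secondPartial (fun z => matInfNorm (G z * (G z).transpose)) ξ q' r| ≤ βbar)
    (w l : Fin n → ℝ) (hwl : ∀ k, |w k| ≤ l k)
    (γ b₁ : ℝ) (hγ : 0 < γ)
    (hH : ∀ j : Fin (n + 1),
      (∑ k, f (x j) k * w k) + (1 / 2) * (∑ i, (h (x j) i) ^ 2)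
        + ((∑ k, l k) * β + (1 / 2) * βtilde) * simplexConst x j
        + (1 / (2 * γ)) * (matInfNorm (G (x j) * (G (x j)).transpose)
            + βbar * simplexConst x j) * (∑ k, l k) ^ 2
        ≤ -b₁)
    (lam : Fin (n + 1) → ℝ) (hlam0 : ∀ j, 0 ≤ lam j) (hlam1 : ∑ j, lam j = 1) :
    (∑ k, w k * f (∑ j, lam j • x j) k)
      + (1 / (2 * γ)) *
          (∑ i, ((G (∑ j, lam j • x j)).transpose.mulVec w i) ^ 2)
      + (1 / 2) * (∑ i, (h (∑ j, lam j • x j) i) ^ 2) ≤ -b₁ :=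
  hj_vertex_bound_general n m q x f h G β βtilde βbar U hU hσU hf hhbar hgbar hβ hβtilde hβbar w l
    hwl γ b₁ hγ hH lam hlam0 hlam1
end

section
/- Let T > 0, b > 0, and c₁ < c be real numbers. Let w : [0, T] → ℝ be continuous with w(0) < c, and suppose that for every t ∈ [0, T) with c₁ ≤ w(t) ≤ c, the upper right Dini derivative satisfies limsup_{h→0⁺} (w(t+h) − w(t))/h ≤ −b. Then w(t) < c for all t ∈ [0, T]. -/
/-!
Let `t₀` be the first time `w` reaches `c`. Just before `t₀` the value of `w` lies in the shell
`[c₁, c]`, where the upper right Dini derivative is negative, so `w` is antitone on a short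
interval `[a, t₀]`. Hence `c ≤ w t₀ ≤ w a < c`, a contradiction.
-/

open Set Filter Topology

/-- Being `sInf` of the eventual upper bounds, this takes the junk value `0` when the difference
quotients are not eventually bounded above; only negative values carry information. -/
noncomputable def upperRightDini (f : ℝ → ℝ) (x : ℝ) : ℝ :=
  limsup (fun h : ℝ => (f (x + h) - f x) / h) (𝓝[>] 0)

theorem Real.isBoundedUnder_le_of_limsup_neg {α : Type*} {u : α → ℝ} {l : Filter α}
    (h : limsup u l < 0) : l.IsBoundedUnder (· ≤ ·) u := by
  by_contra hunbdd
  have hempty : {a | ∀ᶠ n in l, u n ≤ a} = ∅ :=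
    eq_empty_of_forall_notMem fun a ha => hunbdd ⟨a, ha⟩
  rw [limsup_eq, hempty, Real.sInf_empty] at h
  exact lt_irrefl 0 h

theorem eventually_slope_neg_of_upperRightDini_neg {f : ℝ → ℝ} {x : ℝ}
    (h : upperRightDini f x < 0) : ∀ᶠ z in 𝓝[>] x, slope f x z < 0 := by
  have hquot : ∀ᶠ h in 𝓝[>] 0, (f (x + h) - f x) / h < 0 :=
    eventually_lt_of_limsup_lt h (Real.isBoundedUnder_le_of_limsup_neg h)
  have hshift : Tendsto (· - x) (𝓝[>] x) (𝓝[>] 0) :=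
    ((continuous_sub_right x).tendsto' x 0 (sub_self x)).inf
      (tendsto_principal_principal.2 fun z hz => mem_Ioi.2 (sub_pos.2 hz))
  filter_upwards [hshift.eventually hquot] with z hz
  simpa only [slope_def_field, add_sub_cancel] using hz

theorem antitoneOn_of_upperRightDini_neg {f : ℝ → ℝ} {a b : ℝ} (hf : ContinuousOn f (Icc a b))
    (hD : ∀ x ∈ Ico a b, upperRightDini f x < 0) : AntitoneOn f (Icc a b) := by
  intro x hx y hy hxy
  have hsub : Icc x y ⊆ Icc a b := Icc_subset_Icc hx.1 hy.2
  refine image_le_of_liminf_slope_right_le_deriv_boundary (B := fun _ => f x) (B' := 0)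
    (hf.mono hsub) le_rfl continuousOn_const (fun z _ => hasDerivWithinAt_const z _ (f x))
    (fun z hz r hr => ?_) ⟨hxy, le_rfl⟩
  have hzab : z ∈ Ico a b := ⟨hx.1.trans hz.1, hz.2.trans_le hy.2⟩
  exact ((eventually_slope_neg_of_upperRightDini_neg (hD z hzab)).mono
    fun _ hneg => hneg.trans hr).frequently

theorem ContinuousOn.exists_first_le {f : ℝ → ℝ} {a b c : ℝ} (hf : ContinuousOn f (Icc a b))
    (ha : f a < c) (hcross : ∃ t ∈ Icc a b, c ≤ f t) :
    ∃ t₀ ∈ Ioc a b, c ≤ f t₀ ∧ ∀ t ∈ Ico a t₀, f t < c := by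
  set S := Icc a b ∩ f ⁻¹' Ici c
  have hS : IsCompact S :=
    isCompact_Icc.of_isClosed_subset (hf.preimage_isClosed_of_isClosed isClosed_Icc isClosed_Ici)
      inter_subset_left
  obtain ⟨t₀, ⟨ht₀ab, hct₀⟩, hmin⟩ := hS.exists_isLeast hcross
  have hat₀ : a < t₀ := ht₀ab.1.lt_of_ne fun hat₀ => (hat₀ ▸ ha).not_ge hct₀
  refine ⟨t₀, ⟨hat₀, ht₀ab.2⟩, hct₀, fun t ht => ?_⟩
  by_contra! hct
  exact ht.2.not_ge (hmin ⟨⟨ht.1, ht.2.le.trans ht₀ab.2⟩, hct⟩)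

theorem ContinuousWithinAt.exists_Ico_lt {f : ℝ → ℝ} {a b c t₀ : ℝ}
    (hf : ContinuousWithinAt f (Icc a b) t₀) (hat₀ : a < t₀) (ht₀b : t₀ ≤ b) (hc : c < f t₀) :
    ∃ s ∈ Ico a t₀, ∀ t ∈ Ico s t₀, c < f t := by
  have hpos : ∀ᶠ t in 𝓝[<] t₀, a < t := mem_of_superset (Ioo_mem_nhdsLT hat₀) fun _ ht => ht.1
  have hleft : ∀ᶠ t in 𝓝[<] t₀, a < t ∧ c < f t :=
    hpos.and ((hf.mono_of_mem_nhdsWithin (mem_of_superset (Ioo_mem_nhdsLT hat₀)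
      fun t ht => ⟨ht.1.le, ht.2.le.trans ht₀b⟩)).eventually (lt_mem_nhds hc))
  obtain ⟨s, hst₀, hs⟩ := mem_nhdsLT_iff_exists_Ico_subset.1 hleft
  exact ⟨s, ⟨(hs ⟨le_rfl, hst₀⟩).1.le, hst₀⟩, fun t ht => (hs ht).2⟩

theorem dini_barrier_invariance_general (T b c₁ c : ℝ) (hb : 0 < b) (hc : c₁ < c)
    (w : ℝ → ℝ) (hw : ContinuousOn w (Set.Icc 0 T)) (h0 : w 0 < c)
    (hD : ∀ t ∈ Set.Ico 0 T, c₁ ≤ w t → w t ≤ c →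
      Filter.limsup (fun h : ℝ => (w (t + h) - w t) / h) (nhdsWithin 0 (Set.Ioi 0)) ≤ -b) :
    ∀ t ∈ Set.Icc 0 T, w t < c := by
  by_contra! hcross
  obtain ⟨t₀, ⟨ht₀pos, ht₀T⟩, hct₀, hbelow⟩ := hw.exists_first_le h0 hcross
  obtain ⟨a, ⟨ha0, hat₀⟩, hshell⟩ :=
    (hw t₀ ⟨ht₀pos.le, ht₀T⟩).exists_Ico_lt ht₀pos ht₀T (hc.trans_le hct₀)
  have hanti : AntitoneOn w (Icc a t₀) :=
    antitoneOn_of_upperRightDini_neg (hw.mono (Icc_subset_Icc ha0 ht₀T)) fun x hx =>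
      (hD x ⟨ha0.trans hx.1, hx.2.trans_le ht₀T⟩ (hshell x hx).le
        (hbelow x ⟨ha0.trans hx.1, hx.2⟩).le).trans_lt (neg_neg_of_pos hb)
  have hdecr : w t₀ ≤ w a := hanti (left_mem_Icc.2 hat₀.le) (right_mem_Icc.2 hat₀.le) hat₀.le
  exact (hct₀.trans hdecr).not_gt (hbelow a ⟨ha0, hat₀⟩)

/-- Dini-derivative barrier argument on the real line. If `w(0) < c` and the
upper right Dini derivative of `w` is `≤ −b < 0` whenever `w(t)` lies in the shell
`[c₁, c]` (for `t ∈ [0, T)`), then `w(t) < c` on all of `[0, T]`. -/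
theorem dini_barrier_invariance (T b c₁ c : ℝ) (hT : 0 < T) (hb : 0 < b) (hc : c₁ < c)
    (w : ℝ → ℝ) (hw : ContinuousOn w (Set.Icc 0 T)) (h0 : w 0 < c)
    (hD : ∀ t ∈ Set.Ico 0 T, c₁ ≤ w t → w t ≤ c →
      Filter.limsup (fun h : ℝ => (w (t + h) - w t) / h) (nhdsWithin 0 (Set.Ioi 0)) ≤ -b) :
    ∀ t ∈ Set.Icc 0 T, w t < c :=
  dini_barrier_invariance_general T b c₁ c hb hc w hw h0 hD
end

section
/- Let Ω ⊆ ℝ^n be a set, let f : ℝ^n → ℝ^n, G : ℝ^n → ℝ^{n×m}, and h : ℝ^n → ℝ^q be continuous, let γ > 0, and let V : ℝ^n → ℝ be differentiable with V(z) ≥ 0 for all z ∈ Ω and satisfying the Hamilton–Jacobi inequality ∇V(z) · f(z) + (1/(2γ))‖G(z)ᵀ ∇V(z)‖₂² + (1/2)‖h(z)‖₂² ≤ 0 for all z ∈ Ω. Let τ > 0, let u : [0, τ] → ℝ^m be continuous, and let x : [0, τ] → ℝ^n be differentiable with x'(t) = f(x(t)) + G(x(t)) u(t) and x(t) ∈ Ω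 for all t ∈ [0, τ]. Define y(t) = h(x(t)). Then (∫₀^τ ‖y(t)‖₂² dt)^{1/2} ≤ √γ · (∫₀^τ ‖u(t)‖₂² dt)^{1/2} + √(2 V(x(0))). In particular the L₂ gain of the input–output map u ↦ y along trajectories remaining in Ω is at most √γ. -/
open scoped RealInnerProductSpace BigOperators

/-!
Completing the square in the Hamilton–Jacobi inequality gives the dissipation inequality
`d/dt V(x t) ≤ γ/2 ‖u t‖² - 1/2 ‖y t‖²` along the trajectory. Integrating over `[0, τ]` and
dropping `V (x τ) ≥ 0` yields `∫ ‖y‖² ≤ γ ∫ ‖u‖² + 2 V (x 0)`, and `√(a + b) ≤ √a + √b`.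
-/

open Set intervalIntegral
open scoped Matrix

theorem real_inner_le_young {F : Type*} [NormedAddCommGroup F] [InnerProductSpace ℝ F]
    {γ : ℝ} (hγ : 0 < γ) (w v : F) :
    ⟪w, v⟫ ≤ 1 / (2 * γ) * ‖w‖ ^ 2 + γ / 2 * ‖v‖ ^ 2 := by
  calc ⟪w, v⟫ ≤ ‖w‖ * ‖v‖ := real_inner_le_norm w v
    _ ≤ 1 / (2 * γ) * ‖w‖ ^ 2 + γ / 2 * ‖v‖ ^ 2 := by
      field_simp
      nlinarith [sq_nonneg (‖w‖ - γ * ‖v‖)]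

namespace EuclideanSpace

variable {ι κ : Type*} [Fintype ι] [Fintype κ]

theorem inner_equiv_symm_mulVec (A : Matrix ι κ ℝ) (p : EuclideanSpace ℝ ι)
    (v : EuclideanSpace ℝ κ) :
    ⟪p, (EuclideanSpace.equiv ι ℝ).symm (A *ᵥ EuclideanSpace.equiv κ ℝ v)⟫ =
      ⟪(EuclideanSpace.equiv κ ℝ).symm (Aᵀ *ᵥ EuclideanSpace.equiv ι ℝ p), v⟫ := by
  simp only [inner_eq_star_dotProduct, star_trivial, PiLp.continuousLinearEquiv_symm_apply]
  rw [dotProduct_comm, Matrix.dotProduct_transpose_mulVec]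
  rfl

end EuclideanSpace

theorem inner_add_mulVec_le_of_hamiltonJacobi {ι κ : Type*} [Fintype ι] [Fintype κ]
    {γ : ℝ} (hγ : 0 < γ) (A : Matrix ι κ ℝ) (p a : EuclideanSpace ℝ ι)
    (v : EuclideanSpace ℝ κ) (c : ℝ)
    (hHJ : ⟪p, a⟫ + 1 / (2 * γ) * ∑ i, (Aᵀ *ᵥ EuclideanSpace.equiv ι ℝ p) i ^ 2
      + 1 / 2 * c ≤ 0) :
    ⟪p, a + (EuclideanSpace.equiv ι ℝ).symm (A *ᵥ EuclideanSpace.equiv κ ℝ v)⟫ ≤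
      γ / 2 * ‖v‖ ^ 2 - 1 / 2 * c := by
  rw [inner_add_right, EuclideanSpace.inner_equiv_symm_mulVec]
  set w := Aᵀ *ᵥ EuclideanSpace.equiv ι ℝ p
  have hyoung := real_inner_le_young hγ ((EuclideanSpace.equiv κ ℝ).symm w) v
  have hw : ‖(EuclideanSpace.equiv κ ℝ).symm w‖ ^ 2 = ∑ i, w i ^ 2 :=
    EuclideanSpace.real_norm_sq_eq _
  rw [hw] at hyoung
  linarith

theorem sub_le_integral_of_inner_gradient_le {E : Type*} [NormedAddCommGroup E]
    [InnerProductSpace ℝ E] [CompleteSpace E] {V : E → ℝ} (hV : Differentiable ℝ V)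
    {x x' : ℝ → E} {s : ℝ → ℝ} {a b : ℝ} (hab : a ≤ b)
    (hx : ∀ t ∈ Icc a b, HasDerivAt x (x' t) t) (hs : ContinuousOn s (Icc a b))
    (hle : ∀ t ∈ Ioo a b, ⟪gradient V (x t), x' t⟫ ≤ s t) :
    V (x b) - V (x a) ≤ ∫ t in a..b, s t := by
  have hVx : ∀ t ∈ Icc a b, HasDerivAt (V ∘ x) ⟪gradient V (x t), x' t⟫ t := fun t ht => by
    simpa using (hV (x t)).hasGradientAt.hasFDerivAt.comp_hasDerivAt t (hx t ht)
  exact sub_le_integral_of_hasDeriv_right_of_le hab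
    (fun t ht => (hVx t ht).continuousAt.continuousWithinAt)
    (fun t ht => (hVx t (Ioo_subset_Icc_self ht)).hasDerivWithinAt)
    (hs.integrableOn_compact isCompact_Icc) hle

theorem Real.sqrt_le_sqrt_mul_sqrt_add_sqrt {a b c d : ℝ} (hb : 0 ≤ b) (hc : 0 ≤ c)
    (hd : 0 ≤ d) (h : a ≤ b * c + d) : √a ≤ √b * √c + √d := by
  rw [Real.sqrt_le_iff]
  refine ⟨by positivity, ?_⟩
  nlinarith [Real.sq_sqrt hb, Real.sq_sqrt hc, Real.sq_sqrt hd, Real.sqrt_nonneg b,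
    Real.sqrt_nonneg c, Real.sqrt_nonneg d, mul_nonneg (mul_nonneg (Real.sqrt_nonneg b)
    (Real.sqrt_nonneg c)) (Real.sqrt_nonneg d)]

theorem l2_gain_along_trajectories_general (n m q : ℕ) (Ω : Set (EuclideanSpace ℝ (Fin n)))
    (f : EuclideanSpace ℝ (Fin n) → EuclideanSpace ℝ (Fin n))
    (G : EuclideanSpace ℝ (Fin n) → Matrix (Fin n) (Fin m) ℝ)
    (h : EuclideanSpace ℝ (Fin n) → EuclideanSpace ℝ (Fin q))
    (hh : Continuous h)
    (γ : ℝ) (hγ : 0 < γ)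
    (V : EuclideanSpace ℝ (Fin n) → ℝ) (hV : Differentiable ℝ V)
    (hVpos : ∀ z ∈ Ω, 0 ≤ V z)
    (hHJ : ∀ z ∈ Ω,
      ⟪gradient V z, f z⟫
        + (1 / (2 * γ)) *
            (∑ i, ((G z).transpose.mulVec
              ((EuclideanSpace.equiv (Fin n) ℝ) (gradient V z)) i) ^ 2)
        + (1 / 2) * ‖h z‖ ^ 2 ≤ 0)
    (τ : ℝ) (hτ : 0 < τ)
    (u : ℝ → EuclideanSpace ℝ (Fin m)) (hu : ContinuousOn u (Set.Icc 0 τ))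
    (x : ℝ → EuclideanSpace ℝ (Fin n))
    (hx : ∀ t ∈ Set.Icc 0 τ,
      HasDerivAt x
        (f (x t) + (EuclideanSpace.equiv (Fin n) ℝ).symm
          ((G (x t)).mulVec ((EuclideanSpace.equiv (Fin m) ℝ) (u t)))) t)
    (hxΩ : ∀ t ∈ Set.Icc 0 τ, x t ∈ Ω) :
    Real.sqrt (∫ t in (0:ℝ)..τ, ‖h (x t)‖ ^ 2) ≤
      Real.sqrt γ * Real.sqrt (∫ t in (0:ℝ)..τ, ‖u t‖ ^ 2) +
        Real.sqrt (2 * V (x 0)) := by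
  have hy : ContinuousOn (fun t => h (x t)) (Icc 0 τ) :=
    hh.comp_continuousOn fun t ht => (hx t ht).continuousAt.continuousWithinAt
  have hU : IntervalIntegrable (fun t => ‖u t‖ ^ 2) MeasureTheory.volume 0 τ :=
    (hu.norm.pow 2).intervalIntegrable_of_Icc hτ.le
  have hY : IntervalIntegrable (fun t => ‖h (x t)‖ ^ 2) MeasureTheory.volume 0 τ :=
    (hy.norm.pow 2).intervalIntegrable_of_Icc hτ.le
  have hsupply : ContinuousOn (fun t => γ / 2 * ‖u t‖ ^ 2 - 1 / 2 * ‖h (x t)‖ ^ 2)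
      (Icc 0 τ) :=
    (continuousOn_const.mul (hu.norm.pow 2)).sub (continuousOn_const.mul (hy.norm.pow 2))
  have hdissipation := sub_le_integral_of_inner_gradient_le hV hτ.le hx hsupply fun t ht => inner_add_mulVec_le_of_hamiltonJacobi hγ _ _ _ _ _
      (hHJ _ (hxΩ t (Ioo_subset_Icc_self ht)))
  rw [integral_sub (hU.const_mul _) (hY.const_mul _), integral_const_mul,
    integral_const_mul] at hdissipation
  have hVτ := hVpos _ (hxΩ τ (right_mem_Icc.2 hτ.le))
  have hV0 := hVpos _ (hxΩ 0 (left_mem_Icc.2 hτ.le))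
  exact Real.sqrt_le_sqrt_mul_sqrt_add_sqrt hγ.le
    (integral_nonneg hτ.le fun t _ => sq_nonneg _) (by linarith) (by linarith)

/-- if a nonnegative differentiable storage function `V` satisfies the
Hamilton–Jacobi inequality on `Ω`, then along any trajectory of `ẋ = f(x) + G(x)u`
remaining in `Ω` the finite-gain `L₂` estimate holds with gain `√γ` and bias
`√(2V(x(0)))`. -/
theorem l2_gain_along_trajectories (n m q : ℕ) (Ω : Set (EuclideanSpace ℝ (Fin n)))
    (f : EuclideanSpace ℝ (Fin n) → EuclideanSpace ℝ (Fin n))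
    (G : EuclideanSpace ℝ (Fin n) → Matrix (Fin n) (Fin m) ℝ)
    (h : EuclideanSpace ℝ (Fin n) → EuclideanSpace ℝ (Fin q))
    (hf : Continuous f) (hG : ∀ i j, Continuous fun z => G z i j) (hh : Continuous h)
    (γ : ℝ) (hγ : 0 < γ)
    (V : EuclideanSpace ℝ (Fin n) → ℝ) (hV : Differentiable ℝ V)
    (hVpos : ∀ z ∈ Ω, 0 ≤ V z)
    (hHJ : ∀ z ∈ Ω,
      ⟪gradient V z, f z⟫
        + (1 / (2 * γ)) *
            (∑ i, ((G z).transpose.mulVec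
              ((EuclideanSpace.equiv (Fin n) ℝ) (gradient V z)) i) ^ 2)
        + (1 / 2) * ‖h z‖ ^ 2 ≤ 0)
    (τ : ℝ) (hτ : 0 < τ)
    (u : ℝ → EuclideanSpace ℝ (Fin m)) (hu : ContinuousOn u (Set.Icc 0 τ))
    (x : ℝ → EuclideanSpace ℝ (Fin n))
    (hx : ∀ t ∈ Set.Icc 0 τ,
      HasDerivAt x
        (f (x t) + (EuclideanSpace.equiv (Fin n) ℝ).symm
          ((G (x t)).mulVec ((EuclideanSpace.equiv (Fin m) ℝ) (u t)))) t)
    (hxΩ : ∀ t ∈ Set.Icc 0 τ, x t ∈ Ω) :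
    Real.sqrt (∫ t in (0:ℝ)..τ, ‖h (x t)‖ ^ 2) ≤
      Real.sqrt γ * Real.sqrt (∫ t in (0:ℝ)..τ, ‖u t‖ ^ 2) +
        Real.sqrt (2 * V (x 0)) :=
  l2_gain_along_trajectories_general n m q Ω f G h hh γ hγ V hV hVpos hHJ τ hτ u hu x hx hxΩ
end
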